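/- Let G be a countable discrete group. Then the collection of minimal closed right ideals of βG either consists of exactly one element or is infinite. -/
import Mathlib


open Filter Topology Set

-- The semigroup structure on `βG = Ultrafilter G` extending the multiplication of `G`;
-- with this structure `βG` is a compact right topological semigroup.
attribute [local instance] Ultrafilter.semigroup

/-- `R ⊆ βG` is a right ideal: `R · βG ⊆ R`. -/
def IsRightIdeal {G : Type*} [Group G] (R : Set (Ultrafilter G)) : Prop :=
  ∀ x ∈ R, ∀ y : Ultrafilter G, x * y ∈ R

/-- A minimal closed right ideal of `βG`: a nonempty closed right ideal containing no
nonempty closed right ideal other than itself. -/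
def IsMinClosedRightIdeal {G : Type*} [Group G] (R : Set (Ultrafilter G)) : Prop :=
  R.Nonempty ∧ IsClosed R ∧ IsRightIdeal R ∧
    ∀ R' : Set (Ultrafilter G), R' ⊆ R → R'.Nonempty → IsClosed R' → IsRightIdeal R' → R' = R

section Aux

variable {G : Type*} [Group G]

/-- The pushforward of ultrafilters is continuous. -/
lemma continuous_umap {α β : Type*} (f : α → β) : Continuous (Ultrafilter.map f) :=
  ultrafilterBasis_is_basis.continuous_iff.2 <| Set.forall_mem_range.mpr fun s => by
    have : Ultrafilter.map f ⁻¹' {u | s ∈ u} = {u | f ⁻¹' s ∈ u} := by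
      ext u; exact Ultrafilter.mem_map
    rw [this]; exact ultrafilter_isOpen_basic _

lemma upure_mul (g : G) (y : Ultrafilter G) :
    (pure g : Ultrafilter G) * y = Ultrafilter.map (g * ·) y :=
  Ultrafilter.coe_inj.mp <| Filter.ext' fun p => by
    simp [Ultrafilter.eventually_mul]

lemma continuous_pure_mul (g : G) :
    Continuous (fun x : Ultrafilter G => (pure g : Ultrafilter G) * x) := by
  have : (fun x : Ultrafilter G => (pure g : Ultrafilter G) * x) = Ultrafilter.map (g * ·) :=
    funext fun x => upure_mul g x
  rw [this]; exact continuous_umap _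

lemma pure_inv_mul_cancel (g : G) (x : Ultrafilter G) :
    (pure g⁻¹ : Ultrafilter G) * ((pure g : Ultrafilter G) * x) = x := by
  rw [upure_mul, upure_mul, Ultrafilter.map_map]
  have : ((g⁻¹ * ·) ∘ (g * ·)) = id := by funext m; simp [mul_assoc]
  rw [this, Ultrafilter.map_id]

lemma mem_closure_pure {A : Set G} {x : Ultrafilter G} (h : A ∈ x) :
    x ∈ closure ((pure : G → Ultrafilter G) '' A) := by
  rw [ultrafilterBasis_is_basis.mem_closure_iff]
  rintro o ⟨s, rfl⟩ hx
  have : (s ∩ A).Nonempty := Ultrafilter.nonempty_of_mem (x.toFilter.inter_sets hx h)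
  obtain ⟨g, hgs, hgA⟩ := this
  exact ⟨pure g, by simpa using hgs, Set.mem_image_of_mem _ hgA⟩

/-- If `A ∈ x` and `pure g * r ∈ C` for all `g ∈ A`, with `C` closed, then `x * r ∈ C`. -/
lemma mul_mem_of_forall {A : Set G} {x : Ultrafilter G} (hA : A ∈ x) (r : Ultrafilter G)
    {C : Set (Ultrafilter G)} (hC : IsClosed C)
    (h : ∀ g ∈ A, (pure g : Ultrafilter G) * r ∈ C) : x * r ∈ C := by
  have h1 : closure ((pure : G → Ultrafilter G) '' A) ⊆ (· * r) ⁻¹' C :=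
    closure_minimal (by rintro _ ⟨g, hg, rfl⟩; exact h g hg)
      (hC.preimage (Ultrafilter.continuous_mul_left r))
  exact h1 (mem_closure_pure hA)

/-- Left translation of a minimal closed right ideal is a minimal closed right ideal. -/
lemma smul_min (g : G) {R : Set (Ultrafilter G)} (h : IsMinClosedRightIdeal R) :
    IsMinClosedRightIdeal ((fun x => (pure g : Ultrafilter G) * x) '' R) := by
  obtain ⟨hne, hcl, hri, hmin⟩ := h
  have closed_image : ∀ (a : G) (S : Set (Ultrafilter G)), IsClosed S →
      IsClosed ((fun x => (pure a : Ultrafilter G) * x) '' S) := fun a S hS =>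
    ((hS.isCompact.image (continuous_pure_mul a))).isClosed
  refine ⟨hne.image _, closed_image g R hcl, ?_, ?_⟩
  · rintro _ ⟨x, hx, rfl⟩ y
    rw [mul_assoc]
    exact Set.mem_image_of_mem _ (hri x hx y)
  · intro R' hR' hne' hcl' hri'
    set R'' := (fun x => (pure g⁻¹ : Ultrafilter G) * x) '' R' with hR''
    have hsub : R'' ⊆ R := by
      rintro _ ⟨z, hz, rfl⟩
      obtain ⟨x, hx, rfl⟩ := hR' hz
      show (pure g⁻¹ : Ultrafilter G) * ((pure g : Ultrafilter G) * x) ∈ R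
      rwa [pure_inv_mul_cancel]
    have hR''eq : R'' = R := by
      refine hmin R'' hsub (hne'.image _) (closed_image g⁻¹ R' hcl') ?_
      rintro _ ⟨z, hz, rfl⟩ y
      rw [mul_assoc]
      exact Set.mem_image_of_mem _ (hri' z hz y)
    have : (fun x => (pure g : Ultrafilter G) * x) '' R'' = R' := by
      rw [hR'', Set.image_image]
      have : ∀ z ∈ R', (fun x => (pure g : Ultrafilter G) * ((pure g⁻¹ : Ultrafilter G) * x)) z
          = z := by
        intro z _
        have := pure_inv_mul_cancel g⁻¹ z
        rwa [inv_inv] at this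
      calc (fun x => (pure g : Ultrafilter G) * ((pure g⁻¹ : Ultrafilter G) * x)) '' R'
          = id '' R' := Set.image_congr this
        _ = R' := Set.image_id R'
    rw [← this, hR''eq]

/-- Two distinct minimal closed right ideals are disjoint; equivalently if they share a point
they are equal. -/
lemma eq_of_mem_inter {R₁ R₂ : Set (Ultrafilter G)} (h₁ : IsMinClosedRightIdeal R₁)
    (h₂ : IsMinClosedRightIdeal R₂) {z : Ultrafilter G} (hz₁ : z ∈ R₁) (hz₂ : z ∈ R₂) :
    R₁ = R₂ := by
  have hne : (R₁ ∩ R₂).Nonempty := ⟨z, hz₁, hz₂⟩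
  have hcl : IsClosed (R₁ ∩ R₂) := h₁.2.1.inter h₂.2.1
  have hri : IsRightIdeal (R₁ ∩ R₂) := fun x hx y =>
    ⟨h₁.2.2.1 x hx.1 y, h₂.2.2.1 x hx.2 y⟩
  have e₁ := h₁.2.2.2 _ Set.inter_subset_left hne hcl hri
  have e₂ := h₂.2.2.2 _ Set.inter_subset_right hne hcl hri
  exact e₁.symm.trans e₂

/-- Existence of a minimal closed right ideal. -/
lemma exists_min_closed_right_ideal :
    ∃ R : Set (Ultrafilter G), IsMinClosedRightIdeal R := by
  set S : Set (Set (Ultrafilter G)) :=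
    {R | R.Nonempty ∧ IsClosed R ∧ IsRightIdeal R} with hS
  have huniv : (Set.univ : Set (Ultrafilter G)) ∈ S :=
    ⟨⟨pure 1, trivial⟩, isClosed_univ, fun _ _ _ => trivial⟩
  have Hc : ∀ c ⊆ S, IsChain (· ⊆ ·) c → c.Nonempty →
      ∃ lb ∈ S, ∀ s ∈ c, lb ⊆ s := by
    intro c hcS hchain hcne
    refine ⟨⋂₀ c, ⟨?_, ?_, ?_⟩, fun s hs => Set.sInter_subset_of_mem hs⟩
    · haveI : Nonempty c := hcne.to_subtype
      have hdir : DirectedOn (· ⊇ ·) c := fun a ha b hb =>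
        (hchain.total ha hb).elim (fun h => ⟨a, ha, subset_rfl, h⟩)
          (fun h => ⟨b, hb, h, subset_rfl⟩)
      refine IsCompact.nonempty_sInter_of_directed_nonempty_isCompact_isClosed
        hdir (fun U hU => (hcS hU).1)
        (fun U hU => (hcS hU).2.1.isCompact) (fun U hU => (hcS hU).2.1)
    · exact isClosed_sInter fun U hU => (hcS hU).2.1
    · intro x hx y
      exact Set.mem_sInter.2 fun U hU => (hcS hU).2.2 x (Set.mem_sInter.1 hx U hU) y
  obtain ⟨m, -, hmin⟩ := zorn_superset_nonempty S Hc _ huniv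
  exact ⟨m, hmin.1.1, hmin.1.2.1, hmin.1.2.2, fun R' h1 h2 h3 h4 =>
    le_antisymm h1 (hmin.2 ⟨h2, h3, h4⟩ h1)⟩

end Aux

/-- For a countable discrete group `G`, the collection of minimal closed right ideals of `βG`
either consists of exactly one element or is infinite. -/
theorem unique_or_infinite_min_closed_right_ideals {G : Type*} [Group G] [Countable G] :
    (∃! R : Set (Ultrafilter G), IsMinClosedRightIdeal R) ∨
      {R : Set (Ultrafilter G) | IsMinClosedRightIdeal R}.Infinite := by
  rcases Set.finite_or_infinite {R : Set (Ultrafilter G) | IsMinClosedRightIdeal R} with hfin | hinf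
  · left
    obtain ⟨R₀, hR₀⟩ := exists_min_closed_right_ideal (G := G)
    refine ⟨R₀, hR₀, fun R₁ hR₁ => ?_⟩
    -- suffices: any two minimal closed right ideals are equal
    by_contra hne
    haveI : Finite ({R : Set (Ultrafilter G) | IsMinClosedRightIdeal R}) := hfin.to_subtype
    set 𝒮 := {R : Set (Ultrafilter G) | IsMinClosedRightIdeal R}
    -- the class map
    let c : G → (𝒮 → 𝒮) := fun g R => ⟨(fun x => (pure g : Ultrafilter G) * x) '' R.1,
      smul_min g R.2⟩
    -- the idempotent in R₀
    obtain ⟨e, heR₀, hee⟩ := exists_idempotent_in_compact_subsemigroup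
      (fun r => Ultrafilter.continuous_mul_left r) R₀ hR₀.1 hR₀.2.1.isCompact
      (fun x hx y _ => hR₀.2.2.1 x hx y)
    -- the class of e
    obtain ⟨F, hF⟩ := (Ultrafilter.map c e).eq_pure_of_finite
    have hA : c ⁻¹' {F} ∈ e := by
      have : {F} ∈ Ultrafilter.map c e := by rw [hF]; exact rfl
      exact this
    -- claim (i): for any minimal ideal R and r ∈ R, e * r ∈ F R
    have claim1 : ∀ (R : 𝒮), ∀ r ∈ R.1, e * r ∈ (F R).1 := by
      intro R r hr
      refine mul_mem_of_forall hA r (F R).2.2.1 ?_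
      intro g hg
      have hg' : c g = F := hg
      have : (pure g : Ultrafilter G) * r ∈ (c g R).1 := Set.mem_image_of_mem _ hr
      rwa [hg'] at this
    -- claim (ii): F ∘ F = F
    have claim2 : ∀ R : 𝒮, F (F R) = F R := by
      intro R
      obtain ⟨r, hr⟩ := R.2.1
      have h1 : e * r ∈ (F R).1 := claim1 R r hr
      have h2 : e * (e * r) ∈ (F (F R)).1 := claim1 (F R) _ h1
      rw [← mul_assoc, hee] at h2
      exact Subtype.ext (eq_of_mem_inter (F (F R)).2 (F R).2 h2 h1)
    -- F injective
    have hAne : (c ⁻¹' {F}).Nonempty := Ultrafilter.nonempty_of_mem hA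
    obtain ⟨g₀, hg₀⟩ := hAne
    have hg₀' : c g₀ = F := hg₀
    have Finj : Function.Injective F := by
      intro R R' hRR'
      rw [← hg₀'] at hRR'
      have : (fun x => (pure g₀⁻¹ : Ultrafilter G) * x) '' (c g₀ R).1
          = (fun x => (pure g₀⁻¹ : Ultrafilter G) * x) '' (c g₀ R').1 := by
        rw [hRR']
      simp only [c, Set.image_image] at this
      have heqid : ∀ (T : Set (Ultrafilter G)),
          (fun x => (pure g₀⁻¹ : Ultrafilter G) * ((pure g₀ : Ultrafilter G) * x)) '' T = T := by
        intro T
        calc (fun x => (pure g₀⁻¹ : Ultrafilter G) * ((pure g₀ : Ultrafilter G) * x)) '' T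
            = id '' T := Set.image_congr fun z _ => pure_inv_mul_cancel g₀ z
          _ = T := Set.image_id T
      rw [heqid, heqid] at this
      exact Subtype.ext this
    -- F = id
    have Fid : ∀ R : 𝒮, F R = R := fun R => Finj (claim2 R)
    -- contradiction
    obtain ⟨r₁, hr₁⟩ := hR₁.1
    have h1 : e * r₁ ∈ R₁ := by
      have := claim1 ⟨R₁, hR₁⟩ r₁ hr₁
      rwa [Fid ⟨R₁, hR₁⟩] at this
    have h2 : e * r₁ ∈ R₀ := hR₀.2.2.1 e heR₀ r₁
    exact hne (eq_of_mem_inter hR₁ hR₀ h1 h2)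
  · right; exact hinf
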